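/- arXiv:2404.00387 — 11 statements merged into one kernel-verified Lean document; each statement's English description precedes it below -/
import Mathlib

section
/- Let n > 1 be an integer and let A be an integer with 2^(n-1) < A < 2^n. Then 2^(n-1)/A + 2^(-(n+1)) is not representable as a precision-(n+1) floating-point number: there do not exist integers C and e with 2^n ≤ C < 2^(n+1) such that 2^(n-1)/A + 2^(-(n+1)) = (C / 2^n) · 2^e. Equivalently, the exact reciprocal of a precision-n floating-point number in (1,2) that is not a power of two is never at the midpoint between two consecutive precision-n floating-point numbers. -/
/-!
Write `x = 2^(n-1)/A + 2^(-(n+1))`. Since `A` lies strictly between `2^(n-1)` and `2^n`, the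
number `x` lies strictly between `1/2` and `1`, so a representation `x = (C / 2^n) · 2^e` with
`C / 2^n ∈ [1, 2)` forces `e = -1`. Clearing denominators then gives `2^(2n) + A = C · A`, so `A`
divides `2^(2n)` and is a power of two; but no power of two lies strictly between `2^(n-1)`
and `2^n`.
-/

theorem eq_of_mul_zpow_mem_Ico {K : Type*} [Field K] [LinearOrder K] [IsStrictOrderedRing K]
    {b m : K} {e k : ℤ} (hb : 1 < b) (hm : m ∈ Set.Ico 1 b)
    (hx : m * b ^ e ∈ Set.Ico (b ^ k) (b ^ (k + 1))) : e = k := by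
  obtain ⟨hm1, hm2⟩ := hm
  obtain ⟨hk1, hk2⟩ := hx
  have hbe : 0 < b ^ e := zpow_pos (by linarith) e
  have h1 : b ^ e < b ^ (k + 1) := by nlinarith
  have h2 : b ^ k < b ^ (e + 1) := by
    rw [zpow_add_one₀ (by positivity)]; nlinarith
  rw [zpow_lt_zpow_iff_right₀ hb] at h1 h2
  omega

theorem Int.not_dvd_two_pow_of_lt_of_lt {n k : ℕ} {a : ℤ} (h1 : 2 ^ (n - 1) < a)
    (h2 : a < 2 ^ n) : ¬ a ∣ 2 ^ k := by
  intro hdvd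
  have ha : 0 ≤ a := ((by positivity : (0 : ℤ) < 2 ^ (n - 1)).trans h1).le
  obtain ⟨j, -, hj⟩ := (dvd_prime_pow Int.prime_two k).1 hdvd
  rw [Int.eq_of_associated_of_nonneg hj ha (by positivity)] at h1 h2
  rw [pow_lt_pow_iff_right₀ one_lt_two] at h1 h2
  omega

theorem div_add_inv_four_mul_mem_Ioo {u a : ℝ} (hu : 1 ≤ u) (ha1 : u + 1 ≤ a)
    (ha2 : a < 2 * u) :
    u / a + (4 * u)⁻¹ ∈ Set.Ioo (1 / 2) 1 := by
  have ha : 0 < a := by linarith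
  have hua : 1 / 2 < u / a := by rw [div_lt_div_iff₀ two_pos ha]; linarith
  have hau : a * (4 * u)⁻¹ < 1 / 2 := by
    rw [← div_eq_mul_inv, div_lt_iff₀ (by positivity)]; linarith
  constructor
  · have : 0 < (4 * u)⁻¹ := by positivity
    linarith
  · rw [← lt_sub_iff_add_lt, div_lt_iff₀ ha]
    linarith

theorem Int.dvd_four_mul_sq_of_div_add_inv_eq {u a c : ℤ} (hu : 0 < u) (ha : 0 < a)
    (h : (u : ℝ) / a + (4 * u : ℝ)⁻¹ = c / (2 * u) * 2⁻¹) : a ∣ 4 * u ^ 2 := by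
  have hu' : (0 : ℝ) < u := by exact_mod_cast hu
  have ha' : (0 : ℝ) < a := by exact_mod_cast ha
  have key : 4 * u ^ 2 + a = c * a := by
    field_simp at h
    exact_mod_cast (by linear_combination h / 4 : (4 * u ^ 2 + a : ℝ) = c * a)
  exact ⟨c - 1, by linear_combination key⟩

theorem reciprocal_not_midpoint_general (n : ℕ) (A : ℤ)
    (hA1 : 2 ^ (n - 1) < A) (hA2 : A < 2 ^ n) :
    ¬ ∃ (C e : ℤ), 2 ^ n ≤ C ∧ C < 2 ^ (n + 1) ∧
      (2 : ℝ) ^ (n - 1) / (A : ℝ) + (2 : ℝ) ^ (-((n : ℤ) + 1))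
        = ((C : ℝ) / 2 ^ n) * (2 : ℝ) ^ e := by
  rintro ⟨C, e, hC1, hC2, hx⟩
  obtain ⟨m, rfl⟩ : ∃ m, n = m + 1 :=
    Nat.exists_eq_add_one.2 (Nat.pos_of_ne_zero fun h => by simp [h] at hA1 hA2; omega)
  rw [Nat.add_sub_cancel] at hA1 hx
  have hquarter : (2 : ℝ) ^ (-(((m + 1 : ℕ) : ℤ) + 1)) = (4 * 2 ^ m)⁻¹ := by
    rw [show -(((m + 1 : ℕ) : ℤ) + 1) = -((m + 2 : ℕ) : ℤ) by omega, zpow_neg, zpow_natCast]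
    ring
  rw [hquarter] at hx
  have hmantissa : (C : ℝ) / 2 ^ (m + 1) ∈ Set.Ico 1 2 := by
    rw [Set.mem_Ico, one_le_div₀ (by positivity), div_lt_iff₀ (by positivity), mul_comm,
      ← pow_succ]
    exact ⟨by exact_mod_cast hC1, by exact_mod_cast hC2⟩
  have hx_mem := div_add_inv_four_mul_mem_Ioo (u := (2 : ℝ) ^ m) (a := A)
    (one_le_pow₀ one_le_two) (by exact_mod_cast hA1) (by rw [← pow_succ']; exact_mod_cast hA2)
  rw [hx, one_div, ← zpow_neg_one] at hx_mem
  have he : e = -1 := eq_of_mul_zpow_mem_Ico one_lt_two hmantissa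
    ⟨hx_mem.1.le, by rw [neg_add_cancel, zpow_zero]; exact hx_mem.2⟩
  rw [he, zpow_neg_one] at hx
  have hA : 0 < A := (by positivity : (0 : ℤ) < 2 ^ m).trans hA1
  have hdvd := Int.dvd_four_mul_sq_of_div_add_inv_eq (u := 2 ^ m) (by positivity) hA
    (by push_cast; rwa [← pow_succ'])
  exact Int.not_dvd_two_pow_of_lt_of_lt (k := 2 * m + 2) hA1 hA2 (by convert hdvd using 1; ring)

/-- For `2^(n-1) < A < 2^n`, the value `2^(n-1)/A + 2^(-(n+1))` is not representable
as a precision-`(n+1)` floating-point number `(C / 2^n) · 2^e` with `2^n ≤ C < 2^(n+1)`: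
the reciprocal of a precision-`n` floating-point number in `(1,2)` that is not a power
of two is never at the midpoint between two consecutive precision-`n` numbers. -/
theorem reciprocal_not_midpoint (n : ℕ) (hn : 1 < n) (A : ℤ)
    (hA1 : 2 ^ (n - 1) < A) (hA2 : A < 2 ^ n) :
    ¬ ∃ (C e : ℤ), 2 ^ n ≤ C ∧ C < 2 ^ (n + 1) ∧
      (2 : ℝ) ^ (n - 1) / (A : ℝ) + (2 : ℝ) ^ (-((n : ℤ) + 1))
        = ((C : ℝ) / 2 ^ n) * (2 : ℝ) ^ e :=
  reciprocal_not_midpoint_general n A hA1 hA2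
end

section
/- Let n > 1 be an integer and let A, B be integers with 2^(n-1) ≤ A < 2^n and 2^(n-1) ≤ B < 2^n, and let p, q be integers. Then there do not exist an integer m ≥ n, an integer C with 2^(m-1) < C < 2^m, and an integer r such that ((A / 2^(n-1)) · 2^p) / ((B / 2^(n-1)) · 2^q) = (C / 2^(m-1) + 1 / 2^m) · 2^r. In other words, the exact quotient of two precision-n floating-point numbers is never a midpoint between two consecutive precision-m floating-point numbers for any m ≥ n. -/
/-!
Writing both sides as "significand · 2^exponent", the quotient is `(A / B) · 2^(p - q)` and the
midpoint is `(2C + 1) · 2^(r - m)`. Clearing denominators and negative powers of two gives an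
integer identity `A · 2^k = B · (2C + 1) · 2^l`, so the odd number `2C + 1` divides `A`.
But `2C + 1 > 2^m ≥ 2^n > A > 0`.
-/

theorem div_mul_zpow_div_div_mul_zpow {K : Type*} [Field K] (a b : K) {s x : K} (hs : s ≠ 0)
    (hx : x ≠ 0) (p q : ℤ) : (a / s * x ^ p) / (b / s * x ^ q) = a / b * x ^ (p - q) := by
  rw [zpow_sub₀ hx]
  field_simp

theorem midpoint_mul_zpow_eq {K : Type*} [Field K] [CharZero K] (c : K) {m : ℕ} (hm : m ≠ 0)
    (r : ℤ) : (c / 2 ^ (m - 1) + 1 / 2 ^ m) * (2 : K) ^ r = (2 * c + 1) * (2 : K) ^ (r - m) := by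
  obtain ⟨m, rfl⟩ := Nat.exists_eq_succ_of_ne_zero hm
  rw [zpow_sub₀ two_ne_zero, zpow_natCast, Nat.succ_sub_one, pow_succ]
  field_simp

theorem exists_mul_pow_eq_mul_pow_of_mul_zpow_eq {K : Type*} [Field K] [CharZero K]
    {a b d : ℤ} (hd : d ≠ 0) {i j : ℤ} (h : (a : K) * (d : K) ^ i = b * (d : K) ^ j) :
    ∃ k l : ℕ, a * d ^ k = b * d ^ l := by
  have hd' : (d : K) ≠ 0 := by exact_mod_cast hd
  refine ⟨(i - min i j).toNat, (j - min i j).toNat, ?_⟩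
  have hk : ((i - min i j).toNat : ℤ) + min i j = i := by omega
  have hl : ((j - min i j).toNat : ℤ) + min i j = j := by omega
  suffices ((a * d ^ (i - min i j).toNat : ℤ) : K) * (d : K) ^ min i j
      = ((b * d ^ (j - min i j).toNat : ℤ) : K) * (d : K) ^ min i j by
    exact_mod_cast mul_right_cancel₀ (zpow_ne_zero _ hd') this
  push_cast
  rw [mul_assoc, mul_assoc, ← zpow_natCast, ← zpow_natCast, ← zpow_add₀ hd', ← zpow_add₀ hd',
    hk, hl, h]

theorem Odd.dvd_of_dvd_mul_two_pow {d a : ℤ} (hd : Odd d) {k : ℕ} (h : d ∣ a * 2 ^ k) : d ∣ a :=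
  (Int.isCoprime_two_right.mpr hd).pow_right.dvd_of_dvd_mul_right h

theorem division_not_midpoint_general (n : ℕ) (A B : ℤ)
    (hA1 : 2 ^ (n - 1) ≤ A) (hA2 : A < 2 ^ n) (p q : ℤ) :
    ¬ ∃ (m : ℕ) (C : ℤ) (r : ℤ), n ≤ m ∧ 2 ^ (m - 1) < C ∧ C < 2 ^ m ∧
      ((A : ℝ) / 2 ^ (n - 1) * (2 : ℝ) ^ p) / ((B : ℝ) / 2 ^ (n - 1) * (2 : ℝ) ^ q)
        = ((C : ℝ) / 2 ^ (m - 1) + 1 / 2 ^ m) * (2 : ℝ) ^ r := by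
  rintro ⟨m, C, r, hnm, hC1, hC2, heq⟩
  have hm : m ≠ 0 := by rintro rfl; norm_num at hC1 hC2; omega
  have hmid : (2 : ℤ) ^ m < 2 * C + 1 := by
    rw [← Nat.sub_one_add_one hm, pow_succ]; omega
  rw [div_mul_zpow_div_div_mul_zpow _ _ (by positivity) two_ne_zero,
    midpoint_mul_zpow_eq _ hm] at heq
  have hB : (B : ℝ) ≠ 0 := by
    rintro hB
    rw [hB, div_zero, zero_mul, eq_comm] at heq
    have hmid_pos : (0 : ℝ) < 2 * C + 1 := by
      exact_mod_cast (by positivity : (0 : ℤ) < 2 ^ m).trans hmid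
    exact (mul_pos hmid_pos (by positivity)).ne' heq
  rw [div_mul_eq_mul_div, div_eq_iff hB] at heq
  have hint : (A : ℝ) * ((2 : ℤ) : ℝ) ^ (p - q)
      = ((B * (2 * C + 1) : ℤ) : ℝ) * ((2 : ℤ) : ℝ) ^ (r - m) := by
    push_cast
    linear_combination heq
  obtain ⟨k, l, hkl⟩ := exists_mul_pow_eq_mul_pow_of_mul_zpow_eq two_ne_zero hint
  have hdvd : 2 * C + 1 ∣ A :=
    (odd_two_mul_add_one C).dvd_of_dvd_mul_two_pow ⟨B * 2 ^ l, by rw [hkl]; ring⟩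
  have hA : 0 < A := (by positivity : (0 : ℤ) < 2 ^ (n - 1)).trans_le hA1
  have hnm' : (2 : ℤ) ^ n ≤ 2 ^ m := pow_le_pow_right₀ one_le_two hnm
  have hle : 2 * C + 1 ≤ A := Int.le_of_dvd hA hdvd
  omega

/-- The exact quotient of two precision-`n` floating-point numbers
`(A / 2^(n-1)) · 2^p` and `(B / 2^(n-1)) · 2^q` is never a midpoint
`(C / 2^(m-1) + 1 / 2^m) · 2^r` between two consecutive precision-`m`
floating-point numbers, for any `m ≥ n`. -/
theorem division_not_midpoint (n : ℕ) (hn : 1 < n) (A B : ℤ)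
    (hA1 : 2 ^ (n - 1) ≤ A) (hA2 : A < 2 ^ n)
    (hB1 : 2 ^ (n - 1) ≤ B) (hB2 : B < 2 ^ n) (p q : ℤ) :
    ¬ ∃ (m : ℕ) (C : ℤ) (r : ℤ), n ≤ m ∧ 2 ^ (m - 1) < C ∧ C < 2 ^ m ∧
      ((A : ℝ) / 2 ^ (n - 1) * (2 : ℝ) ^ p) / ((B : ℝ) / 2 ^ (n - 1) * (2 : ℝ) ^ q)
        = ((C : ℝ) / 2 ^ (m - 1) + 1 / 2 ^ m) * (2 : ℝ) ^ r :=
  division_not_midpoint_general n A B hA1 hA2 p q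
end

section
/- Let n > 1 be an integer and let A, B be integers with 2^(n-1) < A < 2^n, 2^(n-1) < B < 2^n, and A < B. Then there do not exist an integer m ≥ n - 1 and an integer C with 2^(m-1) < C < 2^m such that A / B = (1/2) · (C / 2^(m-1) + 1 / 2^m). -/
/-- Division midpoint lemma, case `A < B`: for significand numerators
`A, B ∈ (2^(n-1), 2^n)` with `A < B`, there is no `m ≥ n - 1` and
`C ∈ (2^(m-1), 2^m)` such that `A / B = (1/2) · (C / 2^(m-1) + 1 / 2^m)`. -/
theorem division_not_midpoint_lt (n : ℕ) (hn : 1 < n) (A B : ℤ)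
    (hA1 : 2 ^ (n - 1) < A) (hA2 : A < 2 ^ n)
    (hB1 : 2 ^ (n - 1) < B) (hB2 : B < 2 ^ n) (hAB : A < B) :
    ¬ ∃ (m : ℕ) (C : ℤ), n - 1 ≤ m ∧ 2 ^ (m - 1) < C ∧ C < 2 ^ m ∧
      (A : ℝ) / (B : ℝ) = (1 / 2) * ((C : ℝ) / 2 ^ (m - 1) + 1 / 2 ^ m) := by
  rintro ⟨m, C, hm, hC1, hC2, heq⟩
  have hm1 : 1 ≤ m := by omega
  obtain ⟨k, rfl⟩ : ∃ k, m = k + 1 := ⟨m - 1, by omega⟩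
  simp only [Nat.add_sub_cancel] at heq
  have hB0 : (0:ℤ) < B := lt_trans (by positivity) hB1
  have hBne : (B:ℝ) ≠ 0 := by exact_mod_cast hB0.ne'
  have hreal : (A:ℝ) * 2 ^ (k + 2) = B * (2 * C + 1) := by
    have h2 : (2:ℝ) ^ k ≠ 0 := by positivity
    refine mul_left_cancel₀ h2 ?_
    field_simp at heq
    linear_combination heq
  have key : A * 2 ^ (k + 2) = B * (2 * C + 1) := by exact_mod_cast hreal
  have hdvd : (2:ℤ) ^ n ∣ B * (2 * C + 1) := by
    rw [← key]
    exact Dvd.dvd.mul_left (pow_dvd_pow 2 (by omega)) A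
  have hodd : ¬ (2:ℤ) ∣ (2 * C + 1) := by omega
  have hcop : IsCoprime ((2:ℤ) ^ n) (2 * C + 1) :=
    IsCoprime.pow_left ((Int.prime_two.coprime_iff_not_dvd).mpr hodd)
  have hBdvd : (2:ℤ) ^ n ∣ B := hcop.dvd_of_dvd_mul_right hdvd
  have := Int.le_of_dvd hB0 hBdvd
  linarith
end

section
/- Let n > 1 be an integer and let A, B be integers with 2^(n-1) < A < 2^n, 2^(n-1) < B < 2^n, and A > B. Then there do not exist an integer m ≥ n - 1 and an integer C with 2^(m-1) < C < 2^m such that A / B = C / 2^(m-1) + 1 / 2^m. -/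
/-!
Clearing denominators turns `A / B = (2C + 1) / 2^m` into `A * 2^m = (2C + 1) * B`. Since `2C + 1`
is odd, all of `2^m`, hence `2^(n-1)`, divides `B`; but `B` lies strictly between `2^(n-1)` and
`2 * 2^(n-1)`.
-/

theorem Int.not_dvd_of_lt_of_lt_mul_add_one {d k x : ℤ} (h1 : d * k < x) (h2 : x < d * (k + 1)) :
    ¬ d ∣ x := by
  rintro ⟨q, rfl⟩
  have hd : 0 ≤ d := by nlinarith
  have hkq : k < q := lt_of_mul_lt_mul_left h1 hd
  have hqk : q < k + 1 := lt_of_mul_lt_mul_left h2 hd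
  omega

theorem Prime.pow_dvd_of_mul_pow_eq_mul {R : Type*} [CommRing R] [IsDomain R]
    [IsPrincipalIdealRing R] {p a b c : R} (hp : Prime p) (hc : ¬ p ∣ c) {k m : ℕ}
    (hkm : k ≤ m) (h : a * p ^ m = c * b) : p ^ k ∣ b := by
  have hcop : IsCoprime (p ^ k) c := ((hp.coprime_iff_not_dvd).2 hc).pow_left
  refine hcop.dvd_of_dvd_mul_left ?_
  rw [← h]
  exact (pow_dvd_pow p hkm).mul_left a

theorem div_two_pow_pred_add_inv_two_pow {K : Type*} [Field K] [NeZero (2 : K)] (x : K) {m : ℕ}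
    (hm : m ≠ 0) : x / 2 ^ (m - 1) + 1 / 2 ^ m = (2 * x + 1) / 2 ^ m := by
  obtain ⟨m, rfl⟩ := Nat.exists_eq_succ_of_ne_zero hm
  rw [Nat.succ_sub_one, pow_succ]
  field_simp

theorem division_not_midpoint_gt_general (n : ℕ) (A B : ℤ)
    (hB1 : 2 ^ (n - 1) < B) (hB2 : B < 2 ^ n) :
    ¬ ∃ (m : ℕ) (C : ℤ), n - 1 ≤ m ∧ 2 ^ (m - 1) < C ∧ C < 2 ^ m ∧
      (A : ℝ) / (B : ℝ) = (C : ℝ) / 2 ^ (m - 1) + 1 / 2 ^ m := by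
  rintro ⟨m, C, hm, hC1, hC2, heq⟩
  have hm0 : m ≠ 0 := by
    -- `0 - 1 = 0` in `ℕ`, so `m = 0` leaves no room for `C`
    rintro rfl
    exact lt_irrefl _ (hC1.trans hC2)
  have hB : (B : ℝ) ≠ 0 := by
    have : (0 : ℤ) < B := lt_trans (by positivity) hB1
    positivity
  have key : A * 2 ^ m = (2 * C + 1) * B := by
    rw [div_two_pow_pred_add_inv_two_pow _ hm0, div_eq_div_iff hB (by positivity)] at heq
    exact_mod_cast heq
  have hodd : ¬ (2 : ℤ) ∣ 2 * C + 1 := by omega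
  refine Int.not_dvd_of_lt_of_lt_mul_add_one (k := 1) (by simpa) ?_
    (Int.prime_two.pow_dvd_of_mul_pow_eq_mul hodd hm key)
  calc B < 2 ^ n := hB2
    _ ≤ 2 ^ (n - 1 + 1) := pow_le_pow_right₀ (by norm_num) (by omega)
    _ = 2 ^ (n - 1) * (1 + 1) := by ring

/-- Division midpoint lemma, case `A > B`: for significand numerators
`A, B ∈ (2^(n-1), 2^n)` with `A > B`, there is no `m ≥ n - 1` and
`C ∈ (2^(m-1), 2^m)` such that `A / B = C / 2^(m-1) + 1 / 2^m`. -/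
theorem division_not_midpoint_gt (n : ℕ) (hn : 1 < n) (A B : ℤ)
    (hA1 : 2 ^ (n - 1) < A) (hA2 : A < 2 ^ n)
    (hB1 : 2 ^ (n - 1) < B) (hB2 : B < 2 ^ n) (hAB : B < A) :
    ¬ ∃ (m : ℕ) (C : ℤ), n - 1 ≤ m ∧ 2 ^ (m - 1) < C ∧ C < 2 ^ m ∧
      (A : ℝ) / (B : ℝ) = (C : ℝ) / 2 ^ (m - 1) + 1 / 2 ^ m :=
  division_not_midpoint_gt_general n A B hB1 hB2
end

section
/- Let n₁ > 1 and n₂ > 1 be integers, let A be an integer with 2^(n₁-1) ≤ A < 2^(n₁), let B be an integer with 2^(n₂-1) ≤ B < 2^(n₂), and let p, q be integers. Then for every integer m ≥ max(n₁, n₂), every integer C with 2^(m-1) < C < 2^m, and every integer r, ((A / 2^(n₁-1)) · 2^p) / ((B / 2^(n₂-1)) · 2^q) ≠ (C / 2^(m-1) + 1 / 2^m) · 2^r. That is, the quotient of floating-point numbers of two (possibly different) precisions is never a midpoint in any precision at least the maximum of the two input precisions. -/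
/-- The quotient of floating-point numbers of two (possibly different) precisions
`n₁`, `n₂` is never a midpoint in any precision `m ≥ max n₁ n₂`. -/
theorem mixed_precision_division_not_midpoint (n₁ n₂ : ℕ) (hn₁ : 1 < n₁) (hn₂ : 1 < n₂)
    (A B : ℤ)
    (hA1 : 2 ^ (n₁ - 1) ≤ A) (hA2 : A < 2 ^ n₁)
    (hB1 : 2 ^ (n₂ - 1) ≤ B) (hB2 : B < 2 ^ n₂) (p q : ℤ) :
    ∀ (m : ℕ), max n₁ n₂ ≤ m → ∀ (C : ℤ), 2 ^ (m - 1) < C → C < 2 ^ m → ∀ (r : ℤ),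
      ((A : ℝ) / 2 ^ (n₁ - 1) * (2 : ℝ) ^ p) / ((B : ℝ) / 2 ^ (n₂ - 1) * (2 : ℝ) ^ q)
        ≠ ((C : ℝ) / 2 ^ (m - 1) + 1 / 2 ^ m) * (2 : ℝ) ^ r := by
  intro m hm C hC1 hC2 r heq
  have hApos : (0:ℤ) < A := lt_of_lt_of_le (by positivity) hA1
  have hBpos : (0:ℤ) < B := lt_of_lt_of_le (by positivity) hB1
  have hAR : (0:ℝ) < A := by exact_mod_cast hApos
  have hBR : (0:ℝ) < B := by exact_mod_cast hBpos
  have hm1 : n₁ ≤ m := le_trans (le_max_left _ _) hm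
  have hm2 : n₂ ≤ m := le_trans (le_max_right _ _) hm
  field_simp at heq
  have hmm : (2:ℝ)^m = 2^(m-1) * 2 := by rw [← pow_succ]; congr 1; omega
  have hpow : (0:ℝ) < 2^(m-1) := by positivity
  have heq2 : (A:ℝ) * 2 ^ p * 2 ^ (n₂ - 1) * (2 ^ (m-1) * 2)
      = (2*C+1) * 2 ^ r * (2 ^ (n₁ - 1) * ((B:ℝ) * 2 ^ q)) := by
    apply mul_left_cancel₀ (ne_of_gt hpow)
    rw [hmm] at heq
    linear_combination heq
  set u : ℤ := p + (n₂-1 : ℕ) + m - (r + (n₁-1 : ℕ) + q) with hu_def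
  have hu : (2:ℝ)^u = 2^p * 2^((n₂-1 : ℕ):ℤ) * 2^(m:ℤ) / (2^r * 2^((n₁-1:ℕ):ℤ) * 2^q) := by
    rw [hu_def, zpow_sub₀ (two_ne_zero), zpow_add₀ (two_ne_zero), zpow_add₀ (two_ne_zero),
      zpow_add₀ (two_ne_zero), zpow_add₀ (two_ne_zero)]
  simp only [zpow_natCast] at hu
  have key : (A:ℝ) * 2^u = (B:ℝ) * (2*C+1) := by
    rw [hu, ← mul_div_assoc, div_eq_iff (by positivity : (0:ℝ) < 2^r * 2^(n₁-1) * 2^q).ne', hmm]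
    linear_combination heq2
  -- integer consequences
  have h2m : (2:ℤ)^m = 2 * 2^(m-1) := by rw [← pow_succ']; congr 1; omega
  have hpowle : (2:ℤ)^n₁ ≤ 2^m := pow_le_pow_right₀ (by norm_num) hm1
  rcases le_or_gt 0 u with hu0 | hu0
  · obtain ⟨k, hk⟩ := Int.eq_ofNat_of_zero_le hu0
    rw [hk, zpow_natCast] at key
    have keyZ : A * 2^k = B * (2*C+1) := by exact_mod_cast key
    have hcop : IsCoprime ((2*C+1 : ℤ)) ((2:ℤ)^k) :=
      IsCoprime.pow_right ⟨1, -C, by ring⟩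
    have hdvd : (2*C+1 : ℤ) ∣ A := hcop.dvd_of_dvd_mul_right ⟨B, by linarith [keyZ]⟩
    have := Int.le_of_dvd hApos hdvd
    linarith
  · obtain ⟨k, hk⟩ : ∃ k : ℕ, u = -(k:ℤ) := ⟨(-u).toNat, by omega⟩
    rw [hk, zpow_neg, zpow_natCast] at key
    have keyZ : A = B * (2*C+1) * 2^k := by
      have h2k : (0:ℝ) < 2^k := by positivity
      have : (A:ℝ) = B * (2*C+1) * 2^k := by
        field_simp at key; linarith [key]
      exact_mod_cast this
    have h2k : (1:ℤ) ≤ 2^k := one_le_pow₀ (by norm_num)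
    have hCpos : (0:ℤ) < C := lt_of_le_of_lt (by positivity) hC1
    have h1 : (2*C+1:ℤ) ≤ B*(2*C+1) :=
      le_mul_of_one_le_left (by linarith) hBpos
    have h2 : B*(2*C+1) ≤ B*(2*C+1)*2^k :=
      le_mul_of_one_le_right (by positivity) h2k
    linarith
end

section
/- Let n > 1 be an integer. For all integers A and B with 2^(n-1) < A < 2^n and 2^(n-1) < B < 2^n, it holds that A / 2^(n-1) ≠ ((B + 1/2) / 2^(n-1))². Equivalently, A / 2^(n-1) ≠ ((B + 1/2)·(B + 1/2)) / 4^(n-1), so no precision-n floating-point significand in the binade [1,2) is the square of a midpoint between consecutive precision-n significands. -/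
/-!
Clearing denominators turns `A / 2^k = ((B + 1/2) / 2^k)²` into the integer equation
`2^(k+2) A = (2B + 1)²`, whose left side is even and whose right side is odd.
-/

theorem Int.two_mul_ne_two_mul_add_one_sq (a b : ℤ) : 2 * a ≠ (2 * b + 1) ^ 2 := by
  have hodd : (2 * b + 1) ^ 2 = 2 * (2 * b ^ 2 + 2 * b) + 1 := by ring
  omega

theorem div_two_pow_eq_sq_midpoint_iff (k : ℕ) (A B : ℤ) :
    (A : ℝ) / 2 ^ k = (((B : ℝ) + 1 / 2) / 2 ^ k) ^ 2 ↔ 2 ^ (k + 2) * A = (2 * B + 1) ^ 2 := by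
  have hk : (2 : ℝ) ^ k ≠ 0 := by positivity
  rw [← @Int.cast_inj ℝ]
  push_cast
  rw [div_pow, div_eq_div_iff hk (pow_ne_zero 2 hk)]
  constructor <;> intro h
  · apply mul_right_cancel₀ hk
    linear_combination 4 * h
  · linear_combination h * 2 ^ k / 4

theorem sqrt_not_midpoint_first_binade_general (n : ℕ) (A B : ℤ) :
    (A : ℝ) / 2 ^ (n - 1) ≠ (((B : ℝ) + 1 / 2) / 2 ^ (n - 1)) ^ 2 := by
  rw [Ne, div_two_pow_eq_sq_midpoint_iff, pow_succ, mul_comm _ 2, mul_assoc]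
  exact Int.two_mul_ne_two_mul_add_one_sq _ B

/-- No precision-`n` floating-point significand `A / 2^(n-1)` in the binade `[1,2)`
(with `A` interior, hence not a power of two) is the square of a midpoint
`(B + 1/2) / 2^(n-1)` between consecutive precision-`n` significands. -/
theorem sqrt_not_midpoint_first_binade (n : ℕ) (hn : 1 < n) (A B : ℤ)
    (hA1 : 2 ^ (n - 1) < A) (hA2 : A < 2 ^ n)
    (hB1 : 2 ^ (n - 1) < B) (hB2 : B < 2 ^ n) :
    (A : ℝ) / 2 ^ (n - 1) ≠ (((B : ℝ) + 1 / 2) / 2 ^ (n - 1)) ^ 2 :=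
  sqrt_not_midpoint_first_binade_general n A B
end

section
/- Let n > 1 be an integer. For all integers A and B with 2^(n-1) < A < 2^n and 2^(n-1) < B < 2^n, it holds that A / 2^(n-2) ≠ ((B + 1/2) / 2^(n-1))². That is, no precision-n floating-point number in the second binade [2,4) (with significand interior to the binade) is the square of a midpoint between consecutive precision-n significands. -/
/-! Clearing denominators, `A / 2^(n-2) = ((2B + 1) / 2^n)^2` becomes `A · 2^(n+2) = (2B + 1)^2`,
with an even left side and an odd right side. -/

theorem Int.cast_div_two_pow_ne_of_odd {A C : ℤ} (hC : Odd C) {k j : ℕ} (hkj : k < j) :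
    (A : ℝ) / 2 ^ k ≠ C / 2 ^ j := by
  intro h
  obtain ⟨d, rfl⟩ : ∃ d, j = k + (d + 1) := ⟨j - k - 1, by omega⟩
  rw [div_eq_div_iff (by positivity) (by positivity)] at h
  have hint : A * 2 ^ (d + 1) * 2 ^ k = C * 2 ^ k := by
    rw [mul_assoc, ← pow_add, add_comm (d + 1)]
    exact_mod_cast h
  have hC_eq : C = 2 * (A * 2 ^ d) := by
    rw [← mul_right_cancel₀ (by positivity) hint]
    ring
  exact Int.not_even_iff_odd.mpr hC ⟨A * 2 ^ d, by omega⟩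

theorem midpoint_div_two_pow_sq (B : ℤ) (m : ℕ) :
    (((B : ℝ) + 1 / 2) / 2 ^ m) ^ 2 = (((2 * B + 1) ^ 2 : ℤ) : ℝ) / 2 ^ (2 * m + 2) := by
  push_cast
  field_simp
  ring

theorem sqrt_not_midpoint_second_binade_general (n : ℕ) (A B : ℤ) :
    (A : ℝ) / 2 ^ (n - 2) ≠ (((B : ℝ) + 1 / 2) / 2 ^ (n - 1)) ^ 2 := by
  rw [midpoint_div_two_pow_sq]
  exact Int.cast_div_two_pow_ne_of_odd ((odd_two_mul_add_one B).pow) (by omega)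

/-- No precision-`n` floating-point number `A / 2^(n-2)` in the second binade `[2,4)`
(with significand interior to the binade) is the square of a midpoint
`(B + 1/2) / 2^(n-1)` between consecutive precision-`n` significands. -/
theorem sqrt_not_midpoint_second_binade (n : ℕ) (hn : 1 < n) (A B : ℤ)
    (hA1 : 2 ^ (n - 1) < A) (hA2 : A < 2 ^ n)
    (hB1 : 2 ^ (n - 1) < B) (hB2 : B < 2 ^ n) :
    (A : ℝ) / 2 ^ (n - 2) ≠ (((B : ℝ) + 1 / 2) / 2 ^ (n - 1)) ^ 2 :=
  sqrt_not_midpoint_second_binade_general n A B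
end

section
/- Let n > 1 be an integer, let A be an integer with 2^(n-1) < A < 2^n, and let e be any integer. Then for all integers B with 2^(n-1) ≤ B < 2^n and all integers r, the real square root satisfies √((A / 2^(n-1)) · 2^e) ≠ ((B + 1/2) / 2^(n-1)) · 2^r. That is, the square root of a precision-n floating-point number that is not a power of two is never the midpoint between two consecutive precision-n floating-point numbers. -/
/-- The square root of a precision-`n` floating-point number `(A / 2^(n-1)) · 2^e`
that is not a power of two (`2^(n-1) < A < 2^n`) is never the midpoint
`((B + 1/2) / 2^(n-1)) · 2^r` between two consecutive precision-`n`
floating-point numbers. -/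
theorem sqrt_not_midpoint (n : ℕ) (hn : 1 < n) (A : ℤ)
    (hA1 : 2 ^ (n - 1) < A) (hA2 : A < 2 ^ n) (e : ℤ) :
    ∀ (B : ℤ), 2 ^ (n - 1) ≤ B → B < 2 ^ n → ∀ (r : ℤ),
      Real.sqrt ((A : ℝ) / 2 ^ (n - 1) * (2 : ℝ) ^ e)
        ≠ ((B : ℝ) + 1 / 2) / 2 ^ (n - 1) * (2 : ℝ) ^ r := by
  intro B hB1 hB2 r h
  have hA0 : (0:ℤ) < A := lt_trans (by positivity) hA1
  have hx : (0:ℝ) ≤ (A : ℝ) / 2 ^ (n - 1) * (2 : ℝ) ^ e := by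
    have : (0:ℝ) < (A:ℝ) := by exact_mod_cast hA0
    positivity
  have hsq : (A : ℝ) / 2 ^ (n - 1) * (2 : ℝ) ^ e
      = (((B : ℝ) + 1 / 2) / 2 ^ (n - 1) * (2 : ℝ) ^ r)^2 := by
    rw [← h, Real.sq_sqrt hx]
  have hpow : ((2:ℝ)) ^ (n-1) = (2:ℝ) ^ ((n:ℤ) - 1) := by
    rw [← zpow_natCast]
    congr 1
    omega
  rw [hpow] at hsq
  have h2 : (2:ℝ) ≠ 0 := two_ne_zero
  have step : ((B : ℝ) + 1 / 2) / 2 ^ ((n:ℤ)-1) * (2 : ℝ) ^ r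
      = ((2*B+1 : ℤ) : ℝ) * (2:ℝ) ^ (r - (n:ℤ)) := by
    push_cast
    rw [show ((B:ℝ) + 1/2) = (2*(B:ℝ)+1)/2 from by ring, div_div,
      ← zpow_one_add₀ h2, show (1 + ((n:ℤ)-1)) = (n:ℤ) from by ring,
      div_mul_eq_mul_div, mul_div_assoc, ← zpow_sub₀ h2]
  rw [step] at hsq
  have hsq' : (A:ℝ) * (2:ℝ) ^ (e - ((n:ℤ)-1))
      = ((2*B+1 : ℤ) : ℝ)^2 * (2:ℝ) ^ (2*r - 2*(n:ℤ)) := by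
    have l : (A:ℝ) * (2:ℝ)^(e-((n:ℤ)-1)) = (A:ℝ)/2^((n:ℤ)-1)*2^e := by
      rw [zpow_sub₀ h2]; ring
    rw [l, hsq, mul_pow, sq ((2:ℝ)^(r-(n:ℤ))), ← zpow_add₀ h2]
    ring_nf
  have key : (A:ℝ) * (2:ℝ) ^ (e + n + 1 - 2*r) = ((2*B+1 : ℤ) : ℝ)^2 := by
    calc (A:ℝ) * (2:ℝ) ^ (e + n + 1 - 2*r)
        = (A:ℝ) * (2:ℝ) ^ (e - ((n:ℤ)-1)) * (2:ℝ) ^ (2*(n:ℤ) - 2*r) := by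
          rw [mul_assoc, ← zpow_add₀ h2]; ring_nf
      _ = ((2*B+1 : ℤ) : ℝ)^2 * (2:ℝ) ^ (2*r - 2*(n:ℤ)) * (2:ℝ) ^ (2*(n:ℤ) - 2*r) := by
          rw [hsq']
      _ = ((2*B+1 : ℤ) : ℝ)^2 := by
          rw [mul_assoc, ← zpow_add₀ h2]; norm_num
  set k : ℤ := e + n + 1 - 2*r with hk
  have hBn : (2:ℤ)^n + 1 ≤ 2*B + 1 := by
    have : (2:ℤ)^n = 2 * 2^(n-1) := by
      rw [← pow_succ']; congr 1; omega
    omega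
  have hn2 : (2:ℤ)^n < ((2:ℤ)^n+1)^2 := by nlinarith [pow_pos (by norm_num : (0:ℤ)<2) n]
  have hodd1 : Odd (2*B+1) := ⟨B, by ring⟩
  have hodd : Odd ((2*B+1)^2) := hodd1.pow
  rcases le_or_gt 0 k with hk0 | hk0
  · obtain ⟨m, hm⟩ := Int.eq_ofNat_of_zero_le hk0
    have : (A:ℝ) * ((2:ℝ)^m) = ((2*B+1:ℤ):ℝ)^2 := by
      rw [← key, hm, zpow_natCast]
    have hz : A * 2^m = (2*B+1)^2 := by exact_mod_cast this
    rcases Nat.eq_zero_or_pos m with hm0 | hm0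
    · subst hm0
      simp at hz
      nlinarith [hz, hBn, hn2]
    · have heven : Even (A * 2^m) :=
        (even_iff_two_dvd).mpr (Dvd.dvd.mul_left (dvd_pow_self 2 (by omega : m ≠ 0)) A)
      rw [hz] at heven
      exact (Int.not_odd_iff_even.mpr heven) hodd
  · obtain ⟨m, hm⟩ := Int.eq_ofNat_of_zero_le (by omega : (0:ℤ) ≤ -k)
    have hr : (A:ℝ) = ((2*B+1:ℤ):ℝ)^2 * (2:ℝ)^m := by
      rw [← key, mul_assoc, ← zpow_natCast (2:ℝ), ← hm, ← zpow_add₀ h2]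
      simp
    have hz : A = (2*B+1)^2 * 2^m := by exact_mod_cast hr
    have hm1 : (1:ℤ) ≤ 2^m := one_le_pow₀ (by norm_num)
    nlinarith [hz, hBn, hn2, hm1]
end

section
/- Let n > 1 be an integer and let A be an integer with 2^(n-1) < A < 2^n. Then there exists a unique integer B such that for every integer B', |B / 2^n − 2^(n-1)/A| ≤ |B' / 2^n − 2^(n-1)/A|. In other words, the reciprocal 2^(n-1)/A has a unique nearest point on the grid of integer multiples of 2^(-n), so round-to-nearest of the reciprocal is well defined without any tie-breaking rule. -/
/-- For `2^(n-1) < A < 2^n`, the reciprocal `2^(n-1)/A` has a unique nearest point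
on the grid of integer multiples of `2^(-n)`, so round-to-nearest of the reciprocal
is well defined without any tie-breaking rule. -/
theorem reciprocal_round_nearest_unique (n : ℕ) (hn : 1 < n) (A : ℤ)
    (hA1 : 2 ^ (n - 1) < A) (hA2 : A < 2 ^ n) :
    ∃! B : ℤ, ∀ B' : ℤ,
      |(B : ℝ) / 2 ^ n - 2 ^ (n - 1) / (A : ℝ)|
        ≤ |(B' : ℝ) / 2 ^ n - 2 ^ (n - 1) / (A : ℝ)| := by
  have hA0 : (0:ℤ) < A := lt_trans (by positivity) hA1
  have hAr : (0:ℝ) < (A:ℝ) := by exact_mod_cast hA0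
  have h2n : (0:ℝ) < (2:ℝ)^n := by positivity
  set y : ℝ := 2 ^ (n-1) / (A:ℝ) with hy
  set x : ℝ := 2 ^ n * y with hx
  have habs : ∀ B : ℤ, |(B:ℝ)/2^n - y| = |(B:ℝ) - x| / 2^n := by
    intro B
    rw [hx, eq_div_iff h2n.ne']
    rw [show |(B:ℝ) - 2^n * y| = |((B:ℝ)/2^n - y) * 2^n| by
      congr 1; field_simp]
    rw [abs_mul, abs_of_pos h2n]
  have hiff : ∀ B : ℤ, (∀ B' : ℤ, |(B:ℝ)/2^n - y| ≤ |(B':ℝ)/2^n - y|)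
      ↔ ∀ B' : ℤ, |(B:ℝ) - x| ≤ |(B':ℝ) - x| := by
    intro B
    constructor <;> intro h B' <;> have hB := h B'
    · rw [habs, habs] at hB; exact (div_le_div_iff_of_pos_right h2n).mp hB
    · rw [habs, habs]; exact (div_le_div_iff_of_pos_right h2n).mpr hB
  -- no tie: 2x is not an integer
  have hne : ∀ m : ℤ, (m:ℝ) ≠ 2 * x := by
    intro m hm
    have hpow : (2:ℝ)^(2*n) = 2^n * 2^(n-1) * 2 := by
      rw [show 2*n = n + (n-1) + 1 by omega, pow_add, pow_add, pow_one]
    have hmA : m * A = 2 ^ (2*n) := by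
      have hr : (m:ℝ) * A = 2^(2*n) := by
        rw [hx, hy] at hm
        rw [hpow]
        field_simp at hm ⊢
        linarith
      exact_mod_cast hr
    have hdvd : A ∣ 2 ^ (2*n) := ⟨m, by linarith [mul_comm m A]⟩
    have hdvd' : A.natAbs ∣ 2 ^ (2*n) := by
      have h := Int.natAbs_dvd_natAbs.mpr hdvd
      simp only [Int.natAbs_pow, Int.natAbs_natCast] at h
      exact h
    obtain ⟨k, hk, hAk⟩ := (Nat.dvd_prime_pow Nat.prime_two).mp hdvd'
    have hAk' : A = 2 ^ k := by
      have h1 : ((A.natAbs : ℤ)) = A := Int.natAbs_of_nonneg hA0.le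
      rw [← h1, hAk]
      push_cast
      ring
    rw [hAk'] at hA1 hA2
    have hk1 : n - 1 < k := by
      have := (pow_lt_pow_iff_right₀ (a := (2:ℤ)) one_lt_two).mp hA1
      exact this
    have hk2 : k < n := by
      have := (pow_lt_pow_iff_right₀ (a := (2:ℤ)) one_lt_two).mp hA2
      exact this
    omega
  -- round x is the nearest integer
  have hnear : ∀ z : ℤ, |(round x : ℝ) - x| ≤ |(z:ℝ) - x| := by
    intro z
    rcases eq_or_ne z (round x) with rfl | hzz
    · exact le_refl _
    · have h1 : (1:ℝ) ≤ |(z:ℝ) - (round x : ℝ)| := by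
        have hz0 : z - round x ≠ 0 := sub_ne_zero.mpr hzz
        have := Int.one_le_abs hz0
        exact_mod_cast this
      have h2 : |(round x : ℝ) - x| ≤ 1/2 := by
        rw [abs_sub_comm]; exact abs_sub_round x
      have ht : |(z:ℝ) - (round x : ℝ)| ≤ |(z:ℝ) - x| + |x - (round x : ℝ)| :=
        abs_sub_le _ _ _
      rw [abs_sub_comm x _] at ht
      linarith
  refine ⟨round x, ?_, ?_⟩
  · exact (hiff (round x)).mpr hnear
  · intro B hB
    replace hB := (hiff B).mp hB
    have h1 : |(B:ℝ) - x| ≤ |(round x : ℝ) - x| := hB (round x)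
    have h2 : |(round x : ℝ) - x| ≤ |(B:ℝ) - x| := hnear B
    have heq : |(B:ℝ) - x| = |(round x : ℝ) - x| := le_antisymm h1 h2
    rcases abs_eq_abs.mp heq with h | h
    · have : (B:ℝ) = (round x : ℝ) := by linarith
      exact_mod_cast this
    · exfalso
      apply hne (B + round x)
      push_cast
      linarith
end

section
/- Let n > 1 be an integer, let A, B be integers with 2^(n-1) ≤ B ≤ A < 2^n, and let m ≥ n be an integer. Then there exists a unique integer C such that for every integer C', |C / 2^(m-1) − A/B| ≤ |C' / 2^(m-1) − A/B|. In other words, the quotient A/B ∈ [1,2) has a unique nearest point on the grid of integer multiples of 2^(-(m-1)), so round-to-nearest of the quotient in precision m is well defined without any tie-breaking rule. -/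
/-- If `x` is never exactly halfway between integers, the nearest integer is unique. -/
lemma nearest_int_unique (x : ℝ) (h : ∀ k : ℤ, x ≠ (k : ℝ) + 1/2) :
    ∃! C : ℤ, ∀ C' : ℤ, |(C : ℝ) - x| ≤ |(C' : ℝ) - x| := by
  have hmin : ∀ C' : ℤ, |(round x : ℝ) - x| ≤ |(C' : ℝ) - x| := by
    intro C'
    by_cases hC : C' = round x
    · subst hC; exact le_refl _
    · have h1 : (1 : ℝ) ≤ |(C' : ℝ) - (round x : ℝ)| := by
        have : (1 : ℤ) ≤ |C' - round x| := Int.one_le_abs (by omega)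
        exact_mod_cast this
      have h2 : |x - (round x : ℝ)| ≤ 1/2 := abs_sub_round x
      have h3 : |(C' : ℝ) - (round x : ℝ)| ≤ |(C' : ℝ) - x| + |x - (round x : ℝ)| :=
        abs_sub_le _ _ _
      have h4 : |(round x : ℝ) - x| = |x - (round x : ℝ)| := abs_sub_comm _ _
      linarith
  refine ⟨round x, hmin, ?_⟩
  intro y hy
  have h1 : |(y : ℝ) - x| ≤ |(round x : ℝ) - x| := hy _
  have h2 : |(round x : ℝ) - x| ≤ |(y : ℝ) - x| := hmin _
  have heq : |(y : ℝ) - x| = |(round x : ℝ) - x| := le_antisymm h1 h2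
  rcases abs_eq_abs.mp heq with hcase | hcase
  · have : (y : ℝ) = (round x : ℝ) := by linarith
    exact_mod_cast this
  · -- 2x = y + round x
    have hx2 : 2 * x = (y : ℝ) + (round x : ℝ) := by linarith
    rcases Int.even_or_odd (y + round x) with ⟨t, ht⟩ | ⟨t, ht⟩
    · -- x = t, so both y and round x equal t
      have hxt : x = (t : ℝ) := by
        have : ((y + round x : ℤ) : ℝ) = ((t + t : ℤ) : ℝ) := congrArg (Int.cast : ℤ → ℝ) ht
        push_cast at this; linarith
      have hy0 : |(y : ℝ) - x| ≤ 0 := by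
        have := hy t; rw [hxt] at this ⊢; simpa using this
      have hr0 : |(round x : ℝ) - x| ≤ 0 := by
        have := hmin t; rw [hxt] at this ⊢; simp
      have : (y : ℝ) = (round x : ℝ) := by
        have a1 := abs_nonneg ((y:ℝ) - x)
        have a2 := abs_nonneg ((round x:ℝ) - x)
        have e1 : |(y : ℝ) - x| = 0 := le_antisymm hy0 a1
        have e2 : |(round x : ℝ) - x| = 0 := le_antisymm hr0 a2
        have := abs_eq_zero.mp e1
        have := abs_eq_zero.mp e2
        linarith [abs_eq_zero.mp e1, abs_eq_zero.mp e2]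
      exact_mod_cast this
    · exfalso
      apply h t
      have : ((y + round x : ℤ) : ℝ) = ((2*t + 1 : ℤ) : ℝ) := congrArg (Int.cast : ℤ → ℝ) ht
      push_cast at this
      linarith

/-- For significands `2^(n-1) ≤ B ≤ A < 2^n` and precision `m ≥ n`, the quotient
`A/B ∈ [1,2)` has a unique nearest point on the grid of integer multiples of
`2^(-(m-1))`, so round-to-nearest of the quotient in precision `m` is well defined
without any tie-breaking rule. -/
theorem division_round_nearest_unique (n : ℕ) (hn : 1 < n) (A B : ℤ)
    (hB1 : 2 ^ (n - 1) ≤ B) (hBA : B ≤ A) (hA2 : A < 2 ^ n)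
    (m : ℕ) (hm : n ≤ m) :
    ∃! C : ℤ, ∀ C' : ℤ,
      |(C : ℝ) / 2 ^ (m - 1) - (A : ℝ) / (B : ℝ)|
        ≤ |(C' : ℝ) / 2 ^ (m - 1) - (A : ℝ) / (B : ℝ)| := by
  have hBpos : (0 : ℤ) < B := lt_of_lt_of_le (by positivity) hB1
  have hBposR : (0 : ℝ) < (B : ℝ) := by exact_mod_cast hBpos
  have hpow : (0 : ℝ) < (2 : ℝ) ^ (m - 1) := by positivity
  set x : ℝ := 2 ^ (m - 1) * (A : ℝ) / (B : ℝ) with hxdef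
  have hkey : ∀ C : ℤ, |(C : ℝ) / 2 ^ (m - 1) - (A : ℝ) / (B : ℝ)|
      = |(C : ℝ) - x| / 2 ^ (m - 1) := by
    intro C
    have h1 : (C : ℝ) / 2 ^ (m - 1) - (A : ℝ) / (B : ℝ) = ((C : ℝ) - x) / 2 ^ (m - 1) := by
      rw [hxdef, sub_div]
      congr 1
      rw [mul_div_assoc, mul_div_cancel_left₀ _ (ne_of_gt hpow)]
    rw [h1, abs_div, abs_of_pos hpow]
  have hnotie : ∀ k : ℤ, x ≠ (k : ℝ) + 1/2 := by
    intro k hk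
    have hm1 : m - 1 + 1 = m := by omega
    have hR : (2 : ℝ) ^ m * (A : ℝ) = (2 * (k : ℝ) + 1) * (B : ℝ) := by
      rw [hxdef] at hk
      have hx2 : 2 ^ (m - 1) * (A : ℝ) = ((k : ℝ) + 1/2) * (B : ℝ) := by
        field_simp at hk; linarith
      have : (2 : ℝ) ^ m = 2 ^ (m - 1) * 2 := by
        rw [← pow_succ, hm1]
      rw [this]; linarith [hx2]
    have hZ : (2 : ℤ) ^ m * A = (2 * k + 1) * B := by exact_mod_cast hR
    have hdvd : (2 : ℤ) ^ m ∣ (2 * k + 1) * B := ⟨A, by linarith [hZ]⟩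
    have hcop : IsCoprime ((2 : ℤ) ^ m) (2 * k + 1) :=
      IsCoprime.pow_left ⟨-k, 1, by ring⟩
    have hdvdB : (2 : ℤ) ^ m ∣ B := hcop.dvd_of_dvd_mul_left hdvd
    have hle : (2 : ℤ) ^ m ≤ B := Int.le_of_dvd hBpos hdvdB
    have : (2 : ℤ) ^ n ≤ 2 ^ m := pow_le_pow_right₀ (by norm_num) hm
    linarith [lt_of_le_of_lt hBA hA2]
  obtain ⟨C, hC, hU⟩ := nearest_int_unique x hnotie
  refine ⟨C, ?_, ?_⟩
  · intro C'
    rw [hkey, hkey]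
    exact (div_le_div_iff_of_pos_right hpow).mpr (hC C')
  · intro y hy
    apply hU
    intro C'
    have := hy C'
    rw [hkey, hkey] at this
    exact (div_le_div_iff_of_pos_right hpow).mp this
end

section
/- Let n > 1 be an integer, let A be an integer with 2^(n-1) < A < 2^n, and let e ∈ {0, 1}. Then there exists a unique integer B such that for every integer B', |B / 2^(n-1) − √(2^e · A / 2^(n-1))| ≤ |B' / 2^(n-1) − √(2^e · A / 2^(n-1))|. In other words, the square root of a precision-n floating-point number in (1,2) ∪ (2,4) that is not a power of two has a unique nearest point on the grid of integer multiples of 2^(-(n-1)), so round-to-nearest of the square root is well defined without any tie-breaking rule. -/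
/-!
Multiplying by `2^(n-1)` turns the question into rounding `t = √(2^e · A · 2^(n-1))` to the
nearest integer, which is unique unless `t` is a half-integer. But `t` is the square root of an
integer, and `(m + 1/2)^2 = m^2 + m + 1/4` never is one.
-/

theorem Real.sqrt_intCast_ne_add_half (N m : ℤ) : √(N : ℝ) ≠ m + 1 / 2 := by
  intro h
  rcases lt_or_ge N 0 with hN | hN
  · rw [Real.sqrt_eq_zero'.mpr (by exact_mod_cast hN.le)] at h
    have : 2 * m + 1 = 0 := by exact_mod_cast (by linarith : (2 * m + 1 : ℝ) = 0)
    omega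
  · have hsq : ((m : ℝ) + 1 / 2) ^ 2 = N := h ▸ Real.sq_sqrt (by exact_mod_cast hN)
    have : 4 * N = 4 * (m ^ 2 + m) + 1 := by
      exact_mod_cast (by linear_combination -4 * hsq : (4 * N : ℝ) = 4 * (m ^ 2 + m) + 1)
    omega

theorem Real.sqrt_div_mul_self (x : ℝ) {y : ℝ} (hy : 0 ≤ y) : √(x / y) * y = √(x * y) := by
  rcases hy.eq_or_lt with rfl | hy
  · simp
  · rw [Real.sqrt_div' x hy.le, Real.sqrt_mul' x hy.le, div_mul_eq_mul_div, mul_div_assoc,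
      Real.div_sqrt]

theorem abs_div_sub_le_abs_div_sub_iff {a b c s : ℝ} (hc : 0 < c) :
    |a / c - s| ≤ |b / c - s| ↔ |a - s * c| ≤ |b - s * c| := by
  have hdiv : ∀ x, x / c - s = (x - s * c) / c := fun x => by field_simp
  rw [hdiv, hdiv, abs_div, abs_div, abs_of_pos hc, div_le_div_iff_of_pos_right hc]

theorem Int.eq_of_abs_sub_lt_half {t : ℝ} {a b : ℤ} (ha : |(a : ℝ) - t| < 1 / 2)
    (hb : |(b : ℝ) - t| < 1 / 2) : a = b := by
  rw [abs_lt] at ha hb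
  have h₁ : a < b + 1 := by exact_mod_cast (by linarith : (a : ℝ) < b + 1)
  have h₂ : b < a + 1 := by exact_mod_cast (by linarith : (b : ℝ) < a + 1)
  omega

theorem abs_intCast_sub_lt_half {t : ℝ} (ht : ∀ m : ℤ, t ≠ m + 1 / 2) {B : ℤ}
    (hB : |(B : ℝ) - t| ≤ 1 / 2) : |(B : ℝ) - t| < 1 / 2 := by
  refine hB.lt_of_ne fun h => ?_
  rcases (abs_eq (by norm_num : (0 : ℝ) ≤ 1 / 2)).mp h with h | h
  · exact ht (B - 1) (by push_cast; linarith)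
  · exact ht B (by linarith)

theorem existsUnique_nearest_int {t : ℝ} (ht : ∀ m : ℤ, t ≠ m + 1 / 2) :
    ∃! B : ℤ, ∀ B' : ℤ, |(B : ℝ) - t| ≤ |(B' : ℝ) - t| := by
  have hround : |(round t : ℝ) - t| < 1 / 2 :=
    abs_intCast_sub_lt_half ht (abs_sub_comm t _ ▸ abs_sub_round t)
  refine ⟨round t, fun B' => ?_, fun B hB => ?_⟩
  · simpa only [abs_sub_comm t] using round_le t B'
  · exact Int.eq_of_abs_sub_lt_half
      (abs_intCast_sub_lt_half ht ((hB (round t)).trans hround.le)) hround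

theorem sqrt_round_nearest_unique_general (n : ℕ) (A : ℤ) (e : ℕ) :
    ∃! B : ℤ, ∀ B' : ℤ,
      |(B : ℝ) / 2 ^ (n - 1) - Real.sqrt (2 ^ e * (A : ℝ) / 2 ^ (n - 1))|
        ≤ |(B' : ℝ) / 2 ^ (n - 1) - Real.sqrt (2 ^ e * (A : ℝ) / 2 ^ (n - 1))| := by
  have hc : (0 : ℝ) < 2 ^ (n - 1) := by positivity
  have ht : √(2 ^ e * (A : ℝ) / 2 ^ (n - 1)) * 2 ^ (n - 1)
      = √((2 ^ e * A * 2 ^ (n - 1) : ℤ) : ℝ) := by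
    rw [Real.sqrt_div_mul_self _ hc.le]
    push_cast
    rfl
  simp only [abs_div_sub_le_abs_div_sub_iff hc, ht]
  exact existsUnique_nearest_int fun m => Real.sqrt_intCast_ne_add_half _ m

/-- For `2^(n-1) < A < 2^n` and `e ∈ {0,1}`, the square root of the
precision-`n` floating-point number `2^e · A / 2^(n-1)` (which lies in
`(1,2) ∪ (2,4)` and is not a power of two) has a unique nearest point on the grid
of integer multiples of `2^(-(n-1))`, so round-to-nearest of the square root is
well defined without any tie-breaking rule. -/
theorem sqrt_round_nearest_unique (n : ℕ) (hn : 1 < n) (A : ℤ)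
    (hA1 : 2 ^ (n - 1) < A) (hA2 : A < 2 ^ n) (e : ℕ) (he : e = 0 ∨ e = 1) :
    ∃! B : ℤ, ∀ B' : ℤ,
      |(B : ℝ) / 2 ^ (n - 1) - Real.sqrt (2 ^ e * (A : ℝ) / 2 ^ (n - 1))|
        ≤ |(B' : ℝ) / 2 ^ (n - 1) - Real.sqrt (2 ^ e * (A : ℝ) / 2 ^ (n - 1))| :=
  sqrt_round_nearest_unique_general n A e
end
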